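/- Every algebraic curvature tensor R on T can be written as a finite sum of Nomizu–Kulkarni squares of symmetric bilinear forms of rank two: there exist r ∈ ℕ and symmetric bilinear forms a₁, …, a_r on T, each of rank two (i.e. the associated linear map X ↦ aᵢ(X,·) has rank two), such that R = a₁×a₁ + a₂×a₂ + … + a_r×a_r. -/

import Mathlib

open scoped BigOperators

variable {T : Type*} [NormedAddCommGroup T] [InnerProductSpace ℝ T] [FiniteDimensional ℝ T]

/-- A map `T → T → T → T → ℝ` that is linear in each of its four arguments. -/
def IsQuadrilinear (R : T → T → T → T → ℝ) : Prop :=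
  (∀ Y U V, IsLinearMap ℝ fun X => R X Y U V) ∧
  (∀ X U V, IsLinearMap ℝ fun Y => R X Y U V) ∧
  (∀ X Y V, IsLinearMap ℝ fun U => R X Y U V) ∧
  (∀ X Y U, IsLinearMap ℝ fun V => R X Y U V)

/-- An algebraic curvature tensor on `T`. -/
def IsAlgCurv (R : T → T → T → T → ℝ) : Prop :=
  IsQuadrilinear R ∧
  (∀ X Y U V : T, R X Y U V = -R Y X U V) ∧
  (∀ X Y U V : T, R X Y U V = -R X Y V U) ∧
  (∀ X Y Z V : T, R X Y Z V + R Y Z X V + R Z X Y V = 0)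

/-- The Nomizu–Kulkarni product of two bilinear forms (given as bundled bilinear maps). -/
noncomputable def NKB (a b : T →ₗ[ℝ] T →ₗ[ℝ] ℝ) : T → T → T → T → ℝ :=
  fun X Y U V => a X U * b Y V - a X V * b Y U - a Y U * b X V + a Y V * b X U

set_option linter.unusedSectionVars false


noncomputable def Psq (ψ : T →ₗ[ℝ] ℝ) : T →ₗ[ℝ] T →ₗ[ℝ] ℝ :=
  LinearMap.mk₂ ℝ (fun X Y => ψ X * ψ Y)
    (by intros; simp [map_add]; ring)
    (by intros; simp [map_smul]; ring)
    (by intros; simp [map_add]; ring)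
    (by intros; simp [map_smul]; ring)

@[simp] lemma Psq_apply (ψ : T →ₗ[ℝ] ℝ) (X Y : T) : Psq ψ X Y = ψ X * ψ Y := rfl

lemma indep_pair {ψ χ : T →ₗ[ℝ] ℝ} (h : ∀ μ : ℝ, χ ≠ μ • ψ ∧ ψ ≠ μ • χ) :
    LinearIndependent ℝ ![ψ, χ] := by
  rw [LinearIndependent.pair_iff]
  intro s t hst
  have ht : t = 0 := by
    by_contra ht0
    have h2 : t • χ = -(s • ψ) := eq_neg_of_add_eq_zero_left (by rw [← hst]; abel)
    refine (h (-(t⁻¹ * s))).1 ?_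
    calc χ = t⁻¹ • (t • χ) := by rw [smul_smul, inv_mul_cancel₀ ht0, one_smul]
    _ = (-(t⁻¹ * s)) • ψ := by rw [h2, smul_neg, smul_smul]; ext; simp
  subst ht
  have hs : s = 0 := by
    by_contra hs0
    have h2 : s • ψ = 0 := by simpa using hst
    have hψ : ψ = 0 := by
      simpa [smul_smul, inv_mul_cancel₀ hs0] using congrArg (fun z => s⁻¹ • z) h2
    exact (h 0).2 (by simp [hψ])
  exact ⟨hs, rfl⟩

/-- there is a vector where χ vanishes but ψ doesn't -/
lemma exists_sep {ψ χ : T →ₗ[ℝ] ℝ} (h : ∀ μ : ℝ, ψ ≠ μ • χ) :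
    ∃ X, χ X = 0 ∧ ψ X ≠ 0 := by
  by_contra hc
  push_neg at hc
  rcases eq_or_ne χ 0 with rfl | hχ0
  · refine (h 0) (LinearMap.ext fun X => ?_)
    simpa using hc X (by simp)
  · obtain ⟨Z, hZ⟩ : ∃ Z, χ Z ≠ 0 := by
      by_contra hz; push_neg at hz; exact hχ0 (LinearMap.ext fun X => by simp [hz])
    refine (h ((χ Z)⁻¹ * ψ Z)) (LinearMap.ext fun X => ?_)
    have hker : χ (X - ((χ Z)⁻¹ * χ X) • Z) = 0 := by
      simp [mul_comm]
      field_simp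
      ring
    have := hc _ hker
    simp only [map_sub, map_smul, smul_eq_mul] at this
    have hψX : ψ X = (χ Z)⁻¹ * χ X * ψ Z := by linarith
    simp [hψX, LinearMap.smul_apply, smul_eq_mul]
    ring

lemma rank_two_of (ψ χ : T →ₗ[ℝ] ℝ) (h : ∀ μ : ℝ, χ ≠ μ • ψ ∧ ψ ≠ μ • χ)
    (β₁ β₂ : ℝ) (hb1 : β₁ ≠ 0) (hb2 : β₂ ≠ 0) :
    LinearMap.rank (β₁ • Psq ψ + β₂ • Psq χ) = 2 := by
  have hli : LinearIndependent ℝ ![ψ, χ] := indep_pair h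
  have happ : ∀ X, (β₁ • Psq ψ + β₂ • Psq χ) X = (β₁ * ψ X) • ψ + (β₂ * χ X) • χ := by
    intro X
    ext Y
    simp [LinearMap.smul_apply, LinearMap.add_apply, smul_eq_mul]
    ring
  have hrange : LinearMap.range (β₁ • Psq ψ + β₂ • Psq χ) =
      Submodule.span ℝ (Set.range ![ψ, χ]) := by
    apply le_antisymm
    · rintro _ ⟨X, rfl⟩
      rw [happ]
      refine Submodule.add_mem _ (Submodule.smul_mem _ _ ?_) (Submodule.smul_mem _ _ ?_) <;>
        apply Submodule.subset_span
      · exact ⟨0, rfl⟩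
      · exact ⟨1, rfl⟩
    · rw [Submodule.span_le]
      rintro _ ⟨u, rfl⟩
      have hψmem : ψ ∈ LinearMap.range (β₁ • Psq ψ + β₂ • Psq χ) := by
        obtain ⟨X, hX1, hX2⟩ := exists_sep (fun μ => (h μ).2)
        refine ⟨(β₁ * ψ X)⁻¹ • X, ?_⟩
        rw [map_smul, happ, hX1]
        simp [smul_smul]
        rw [show (ψ X)⁻¹ * β₁⁻¹ * (β₁ * ψ X) = 1 by field_simp, one_smul]
      have hχmem : χ ∈ LinearMap.range (β₁ • Psq ψ + β₂ • Psq χ) := by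
        obtain ⟨X, hX1, hX2⟩ := exists_sep (fun μ => by
          intro hcon
          exact (h μ).1 hcon)
        refine ⟨(β₂ * χ X)⁻¹ • X, ?_⟩
        rw [map_smul, happ, hX1]
        simp [smul_smul]
        rw [show (χ X)⁻¹ * β₂⁻¹ * (β₂ * χ X) = 1 by field_simp, one_smul]
      fin_cases u
      · simpa using hψmem
      · simpa using hχmem
  have hne : ψ ≠ χ := fun he => (h 1).1 (by rw [one_smul]; exact he.symm)
  have hset : Set.range ![ψ, χ] = {ψ, χ} := by
    ext x
    simp [Fin.exists_fin_two]
    tauto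
  rw [LinearMap.rank, hrange, rank_span hli, hset,
    Cardinal.mk_insert (by simp [hne]), Cardinal.mk_singleton]
  norm_num


open Classical in
noncomputable def nodeForms (g₀ g₁ : T →ₗ[ℝ] ℝ) (c : ℝ) (ψ χ : T →ₗ[ℝ] ℝ) :
    Bool → (T →ₗ[ℝ] T →ₗ[ℝ] ℝ) :=
  fun s =>
    if (∀ μ : ℝ, χ ≠ μ • ψ ∧ ψ ≠ μ • χ) then
      cond s (Real.sqrt ((|c| + c)/4 + 1) • (Psq ψ + Psq χ))
             (Real.sqrt ((|c| - c)/4 + 1) • (Psq ψ - Psq χ))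
    else
      cond s (Real.sqrt 1 • (Psq g₀ + Psq g₁)) (Real.sqrt 1 • (Psq g₀ - Psq g₁))

lemma nodeForms_symm (g₀ g₁ : T →ₗ[ℝ] ℝ) (c : ℝ) (ψ χ : T →ₗ[ℝ] ℝ) (s : Bool) (X Y : T) :
    nodeForms g₀ g₁ c ψ χ s X Y = nodeForms g₀ g₁ c ψ χ s Y X := by
  unfold nodeForms
  split_ifs <;> cases s <;>
    simp only [cond_true, cond_false, LinearMap.smul_apply, LinearMap.add_apply,
      LinearMap.sub_apply, Psq_apply, smul_eq_mul] <;> ring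

lemma nodeForms_rank (g₀ g₁ : T →ₗ[ℝ] ℝ) (hg : ∀ μ : ℝ, g₁ ≠ μ • g₀ ∧ g₀ ≠ μ • g₁)
    (c : ℝ) (ψ χ : T →ₗ[ℝ] ℝ) (s : Bool) :
    LinearMap.rank (nodeForms g₀ g₁ c ψ χ s) = 2 := by
  unfold nodeForms
  have h1 : (0:ℝ) < Real.sqrt ((|c| + c)/4 + 1) :=
    Real.sqrt_pos.mpr (by nlinarith [neg_abs_le c, le_abs_self c])
  have h2 : (0:ℝ) < Real.sqrt ((|c| - c)/4 + 1) :=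
    Real.sqrt_pos.mpr (by nlinarith [neg_abs_le c, le_abs_self c])
  have h3 : (0:ℝ) < Real.sqrt 1 := Real.sqrt_pos.mpr one_pos
  split_ifs with h <;> cases s
  · rw [cond_false]
    convert rank_two_of ψ χ h _ _ (ne_of_gt h2) (neg_ne_zero.mpr (ne_of_gt h2)) using 2
    ext X Y
    simp only [LinearMap.smul_apply, LinearMap.add_apply, LinearMap.sub_apply, smul_eq_mul]
    ring
  · rw [cond_true, smul_add]
    exact rank_two_of ψ χ h _ _ (ne_of_gt h1) (ne_of_gt h1)
  · rw [cond_false]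
    convert rank_two_of g₀ g₁ hg _ _ (ne_of_gt h3) (neg_ne_zero.mpr (ne_of_gt h3)) using 2
    ext X Y
    simp only [LinearMap.smul_apply, LinearMap.add_apply, LinearMap.sub_apply, smul_eq_mul]
    ring
  · rw [cond_true, smul_add]
    exact rank_two_of g₀ g₁ hg _ _ (ne_of_gt h3) (ne_of_gt h3)

lemma nodeForms_sum (g₀ g₁ : T →ₗ[ℝ] ℝ) (c : ℝ) (ψ χ : T →ₗ[ℝ] ℝ) (X Y U V : T) :
    NKB (nodeForms g₀ g₁ c ψ χ true) (nodeForms g₀ g₁ c ψ χ true) X Y U V +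
    NKB (nodeForms g₀ g₁ c ψ χ false) (nodeForms g₀ g₁ c ψ χ false) X Y U V =
    c * NKB (Psq ψ) (Psq χ) X Y U V := by
  unfold nodeForms
  split_ifs with h
  · have hs : Real.sqrt ((|c| + c)/4 + 1) * Real.sqrt ((|c| + c)/4 + 1) = (|c| + c)/4 + 1 :=
      Real.mul_self_sqrt (by nlinarith [neg_abs_le c])
    have ht : Real.sqrt ((|c| - c)/4 + 1) * Real.sqrt ((|c| - c)/4 + 1) = (|c| - c)/4 + 1 :=
      Real.mul_self_sqrt (by nlinarith [le_abs_self c])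
    simp only [cond_true, cond_false, NKB, LinearMap.smul_apply, LinearMap.add_apply,
      LinearMap.sub_apply, Psq_apply, smul_eq_mul]
    linear_combination
      ((ψ X * ψ U + χ X * χ U) * (ψ Y * ψ V + χ Y * χ V) -
       (ψ X * ψ V + χ X * χ V) * (ψ Y * ψ U + χ Y * χ U) -
       (ψ Y * ψ U + χ Y * χ U) * (ψ X * ψ V + χ X * χ V) +
       (ψ Y * ψ V + χ Y * χ V) * (ψ X * ψ U + χ X * χ U)) * hs +
      ((ψ X * ψ U - χ X * χ U) * (ψ Y * ψ V - χ Y * χ V) -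
       (ψ X * ψ V - χ X * χ V) * (ψ Y * ψ U - χ Y * χ U) -
       (ψ Y * ψ U - χ Y * χ U) * (ψ X * ψ V - χ X * χ V) +
       (ψ Y * ψ V - χ Y * χ V) * (ψ X * ψ U - χ X * χ U)) * ht
  · push_neg at h
    obtain ⟨μ, hμ⟩ := h
    simp only [cond_true, cond_false, NKB, LinearMap.smul_apply, LinearMap.add_apply,
      LinearMap.sub_apply, Psq_apply, smul_eq_mul, Real.sqrt_one]
    rcases em (χ = μ • ψ) with h1 | h1
    · rw [h1]; simp only [LinearMap.smul_apply, smul_eq_mul]; ring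
    · rw [hμ h1]; simp only [LinearMap.smul_apply, smul_eq_mul]; ring


lemma pair_symm {R : T → T → T → T → ℝ} (h1 : ∀ X Y U V, R X Y U V = -R Y X U V)
    (h2 : ∀ X Y U V, R X Y U V = -R X Y V U)
    (hB : ∀ X Y Z V, R X Y Z V + R Y Z X V + R Z X Y V = 0) :
    ∀ X Y U V, R X Y U V = R U V X Y := by
  intro X Y U V
  linarith [h1 X Y U V, h1 X Y V U, h1 X U Y V, h1 X U V Y, h1 X V Y U, h1 X V U Y, h1 Y X U V, h1 Y X V U, h1 Y U X V, h1 Y U V X, h1 Y V X U, h1 Y V U X, h1 U X Y V, h1 U X V Y, h1 U Y X V, h1 U Y V X, h1 U V X Y, h1 U V Y X, h1 V X Y U, h1 V X U Y, h1 V Y X U, h1 V Y U X, h1 V U X Y, h1 V U Y X,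
    h2 X Y U V, h2 X Y V U, h2 X U Y V, h2 X U V Y, h2 X V Y U, h2 X V U Y, h2 Y X U V, h2 Y X V U, h2 Y U X V, h2 Y U V X, h2 Y V X U, h2 Y V U X, h2 U X Y V, h2 U X V Y, h2 U Y X V, h2 U Y V X, h2 U V X Y, h2 U V Y X, h2 V X Y U, h2 V X U Y, h2 V Y X U, h2 V Y U X, h2 V U X Y, h2 V U Y X,
    hB X Y U V, hB X Y V U, hB X U Y V, hB X U V Y, hB X V Y U, hB X V U Y, hB Y X U V, hB Y X V U, hB Y U X V, hB Y U V X, hB Y V X U, hB Y V U X, hB U X Y V, hB U X V Y, hB U Y X V, hB U Y V X, hB U V X Y, hB U V Y X, hB V X Y U, hB V X U Y, hB V Y X U, hB V Y U X, hB V U X Y, hB V U Y X]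

lemma isQuad_NKB (a b : T →ₗ[ℝ] T →ₗ[ℝ] ℝ) : IsQuadrilinear (NKB a b) := by
  refine ⟨fun Y U V => ⟨fun X X' => ?_, fun c X => ?_⟩,
          fun X U V => ⟨fun Y Y' => ?_, fun c Y => ?_⟩,
          fun X Y V => ⟨fun U U' => ?_, fun c U => ?_⟩,
          fun X Y U => ⟨fun V V' => ?_, fun c V => ?_⟩⟩ <;>
    simp [NKB, map_add, map_smul, LinearMap.add_apply, LinearMap.smul_apply, smul_eq_mul] <;>
    ring

lemma isQuad_sum {ι : Type*} [Fintype ι] {F : ι → T → T → T → T → ℝ}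
    (h : ∀ x, IsQuadrilinear (F x)) :
    IsQuadrilinear (fun X Y U V => ∑ x, F x X Y U V) := by
  refine ⟨fun Y U V => ⟨fun X X' => ?_, fun c X => ?_⟩,
          fun X U V => ⟨fun Y Y' => ?_, fun c Y => ?_⟩,
          fun X Y V => ⟨fun U U' => ?_, fun c U => ?_⟩,
          fun X Y U => ⟨fun V V' => ?_, fun c V => ?_⟩⟩
  · rw [← Finset.sum_add_distrib]
    exact Finset.sum_congr rfl fun x _ => ((h x).1 Y U V).map_add X X'
  · rw [Finset.smul_sum]
    exact Finset.sum_congr rfl fun x _ => ((h x).1 Y U V).map_smul c X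
  · rw [← Finset.sum_add_distrib]
    exact Finset.sum_congr rfl fun x _ => ((h x).2.1 X U V).map_add Y Y'
  · rw [Finset.smul_sum]
    exact Finset.sum_congr rfl fun x _ => ((h x).2.1 X U V).map_smul c Y
  · rw [← Finset.sum_add_distrib]
    exact Finset.sum_congr rfl fun x _ => ((h x).2.2.1 X Y V).map_add U U'
  · rw [Finset.smul_sum]
    exact Finset.sum_congr rfl fun x _ => ((h x).2.2.1 X Y V).map_smul c U
  · rw [← Finset.sum_add_distrib]
    exact Finset.sum_congr rfl fun x _ => ((h x).2.2.2 X Y U).map_add V V'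
  · rw [Finset.smul_sum]
    exact Finset.sum_congr rfl fun x _ => ((h x).2.2.2 X Y U).map_smul c V

lemma quad_expand {n : ℕ} (b : Module.Basis (Fin n) ℝ T) {F : T → T → T → T → ℝ}
    (hF : IsQuadrilinear F) (X Y U V : T) :
    F X Y U V = ∑ i, ∑ j, ∑ k, ∑ l, b.repr X i * b.repr Y j * b.repr U k * b.repr V l *
      F (b i) (b j) (b k) (b l) := by
  have e1 : ∀ (G : T → ℝ), IsLinearMap ℝ G → ∀ W, G W = ∑ i, b.repr W i * G (b i) := by
    intro G hG W
    calc G W = (IsLinearMap.mk' G hG) W := rfl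
    _ = (IsLinearMap.mk' G hG) (∑ i, b.repr W i • b i) := by rw [b.sum_repr]
    _ = ∑ i, b.repr W i * G (b i) := by
        rw [map_sum]
        exact Finset.sum_congr rfl fun i _ => by rw [map_smul]; rfl
  rw [e1 _ (hF.1 Y U V) X]
  refine Finset.sum_congr rfl fun i _ => ?_
  rw [e1 _ (hF.2.1 (b i) U V) Y, Finset.mul_sum]
  refine Finset.sum_congr rfl fun j _ => ?_
  rw [e1 _ (hF.2.2.1 (b i) (b j) V) U, Finset.mul_sum, Finset.mul_sum]
  refine Finset.sum_congr rfl fun k _ => ?_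
  rw [e1 _ (hF.2.2.2 (b i) (b j) (b k)) V, Finset.mul_sum, Finset.mul_sum, Finset.mul_sum]
  refine Finset.sum_congr rfl fun l _ => ?_
  ring

lemma quad_ext {n : ℕ} (b : Module.Basis (Fin n) ℝ T) {F G : T → T → T → T → ℝ}
    (hF : IsQuadrilinear F) (hG : IsQuadrilinear G)
    (h : ∀ i j k l, F (b i) (b j) (b k) (b l) = G (b i) (b j) (b k) (b l)) :
    ∀ X Y U V, F X Y U V = G X Y U V := by
  intro X Y U V
  rw [quad_expand b hF, quad_expand b hG]
  simp only [h]

noncomputable def sel (f g : T →ₗ[ℝ] ℝ) : Fin 3 → (T →ₗ[ℝ] ℝ) := ![f + g, f, g]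

noncomputable def sgn3 : Fin 3 → ℝ := ![1, -1, -1]

lemma sum3' (c : ℝ) (f g h k : T →ₗ[ℝ] ℝ) (X Y U V : T) :
    (∑ u : Fin 3, ∑ v : Fin 3, (c * sgn3 u * sgn3 v) *
      NKB (Psq (sel f g u)) (Psq (sel h k v)) X Y U V) =
    c * ((f X * g U + g X * f U) * (h Y * k V + k Y * h V)
     - (f X * g V + g X * f V) * (h Y * k U + k Y * h U)
     - (f Y * g U + g Y * f U) * (h X * k V + k X * h V)
     + (f Y * g V + g Y * f V) * (h X * k U + k X * h U)) := by
  simp only [Fin.sum_univ_three, sel, sgn3, Matrix.cons_val_zero, Matrix.cons_val_one,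
    Matrix.head_cons, NKB, Psq_apply, LinearMap.add_apply, Matrix.cons_val_two,
    Matrix.tail_cons]
  ring

lemma sum_ite_push {α : Type*} [Fintype α] (p : Prop) [Decidable p] (f : α → ℝ) :
    (∑ x : α, if p then f x else (0:ℝ)) = if p then ∑ x, f x else 0 := by
  split_ifs <;> simp

/-- every algebraic curvature tensor is a finite sum of Nomizu–Kulkarni
squares of symmetric bilinear forms of rank two. -/
theorem algCurv_eq_sum_nk_squares (R : T → T → T → T → ℝ) (hR : IsAlgCurv R) :
    ∃ (r : ℕ) (a : Fin r → (T →ₗ[ℝ] T →ₗ[ℝ] ℝ)),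
      (∀ i, ∀ X Y : T, a i X Y = a i Y X) ∧
      (∀ i, LinearMap.rank (a i) = 2) ∧
      (∀ X Y U V : T, R X Y U V = ∑ i, NKB (a i) (a i) X Y U V) := by
  classical
  obtain ⟨hQ, h1, h2, hB⟩ := hR
  by_cases hdim : Module.finrank ℝ T ≤ 1
  · refine ⟨0, Fin.elim0, fun i => i.elim0, fun i => i.elim0, fun X Y U V => ?_⟩
    obtain ⟨v, hv⟩ := finrank_le_one_iff.mp hdim
    obtain ⟨s, hs⟩ := hv X
    obtain ⟨t, ht⟩ := hv Y
    have hvv : R v v U V = 0 := by have := h1 v v U V; linarith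
    have e1 : R X Y U V = s * R v Y U V := by
      rw [← hs, (hQ.1 Y U V).map_smul s v]; rfl
    have e2 : R v Y U V = t * R v v U V := by
      rw [← ht, (hQ.2.1 v U V).map_smul t v]; rfl
    simp [e1, e2, hvv]
  · push_neg at hdim
    set n := Module.finrank ℝ T with hn
    let b : Module.Basis (Fin n) ℝ T := Module.finBasis ℝ T
    let φ : Fin n → (T →ₗ[ℝ] ℝ) := fun i => b.coord i
    have hn2 : 2 ≤ n := hdim
    let i₀ : Fin n := ⟨0, by omega⟩
    let i₁ : Fin n := ⟨1, by omega⟩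
    have hφeval : ∀ p q : Fin n, φ p (b q) = if q = p then 1 else 0 := by
      intro p q
      simp [φ, Module.Basis.coord_apply, Module.Basis.repr_self, Finsupp.single_apply]
    have hne : i₁ ≠ i₀ := by simp [i₀, i₁, Fin.ext_iff]
    have hg : ∀ μ : ℝ, φ i₁ ≠ μ • φ i₀ ∧ φ i₀ ≠ μ • φ i₁ := by
      intro μ
      constructor <;> intro hcon
      · have := congrArg (fun f => f (b i₁)) hcon
        simp [hφeval, LinearMap.smul_apply, smul_eq_mul, hne] at this
      · have := congrArg (fun f => f (b i₀)) hcon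
        simp [hφeval, LinearMap.smul_apply, smul_eq_mul, Ne.symm hne] at this
    let C : Fin n → Fin n → Fin n → Fin n → ℝ := fun p q s t =>
      (1/24) * (R (b p) (b s) (b q) (b t) + R (b p) (b t) (b q) (b s))
    let A : (Fin n × Fin n × Fin n × Fin n × Fin 3 × Fin 3) × Bool → (T →ₗ[ℝ] T →ₗ[ℝ] ℝ) := fun x =>
      nodeForms (φ i₀) (φ i₁)
        (C x.1.1 x.1.2.1 x.1.2.2.1 x.1.2.2.2.1 * sgn3 x.1.2.2.2.2.1 * sgn3 x.1.2.2.2.2.2)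
        (sel (φ x.1.1) (φ x.1.2.1) x.1.2.2.2.2.1)
        (sel (φ x.1.2.2.1) (φ x.1.2.2.2.1) x.1.2.2.2.2.2) x.2
    let e := Fintype.equivFin ((Fin n × Fin n × Fin n × Fin n × Fin 3 × Fin 3) × Bool)
    refine ⟨Fintype.card ((Fin n × Fin n × Fin n × Fin n × Fin 3 × Fin 3) × Bool), fun i => A (e.symm i), ?_, ?_, ?_⟩
    · intro i X Y
      exact nodeForms_symm _ _ _ _ _ _ X Y
    · intro i
      exact nodeForms_rank _ _ hg _ _ _ _
    · have hquadS : IsQuadrilinear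
          (fun X Y U V => ∑ i, NKB (A (e.symm i)) (A (e.symm i)) X Y U V) :=
        isQuad_sum (fun i => isQuad_NKB _ _)
      refine quad_ext b hQ hquadS ?_
      intro p₁ p₂ p₃ p₄
      rw [Equiv.sum_comp e.symm (fun x => NKB (A x) (A x) (b p₁) (b p₂) (b p₃) (b p₄))]
      rw [Fintype.sum_prod_type]
      have step2 : ∀ y : Fin n × Fin n × Fin n × Fin n × Fin 3 × Fin 3, (∑ s : Bool, NKB (A (y, s)) (A (y, s)) (b p₁) (b p₂) (b p₃) (b p₄)) =
          (C y.1 y.2.1 y.2.2.1 y.2.2.2.1 * sgn3 y.2.2.2.2.1 * sgn3 y.2.2.2.2.2) *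
            NKB (Psq (sel (φ y.1) (φ y.2.1) y.2.2.2.2.1))
                (Psq (sel (φ y.2.2.1) (φ y.2.2.2.1) y.2.2.2.2.2)) (b p₁) (b p₂) (b p₃) (b p₄) := by
        intro y
        rw [Fintype.sum_bool]
        exact nodeForms_sum _ _ _ _ _ _ _ _ _
      simp only [step2]
      simp only [Fintype.sum_prod_type]
      have step3 : ∀ q₁ q₂ q₃ q₄ : Fin n,
          (∑ u : Fin 3, ∑ v : Fin 3, (C q₁ q₂ q₃ q₄ * sgn3 u * sgn3 v) *
            NKB (Psq (sel (φ q₁) (φ q₂) u)) (Psq (sel (φ q₃) (φ q₄) v)) (b p₁) (b p₂) (b p₃) (b p₄)) =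
          C q₁ q₂ q₃ q₄ *
          ((φ q₁ (b p₁) * φ q₂ (b p₃) + φ q₂ (b p₁) * φ q₁ (b p₃)) * (φ q₃ (b p₂) * φ q₄ (b p₄) + φ q₄ (b p₂) * φ q₃ (b p₄))
          - (φ q₁ (b p₁) * φ q₂ (b p₄) + φ q₂ (b p₁) * φ q₁ (b p₄)) * (φ q₃ (b p₂) * φ q₄ (b p₃) + φ q₄ (b p₂) * φ q₃ (b p₃))
          - (φ q₁ (b p₂) * φ q₂ (b p₃) + φ q₂ (b p₂) * φ q₁ (b p₃)) * (φ q₃ (b p₁) * φ q₄ (b p₄) + φ q₄ (b p₁) * φ q₃ (b p₄))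
          + (φ q₁ (b p₂) * φ q₂ (b p₄) + φ q₂ (b p₂) * φ q₁ (b p₄)) * (φ q₃ (b p₁) * φ q₄ (b p₃) + φ q₄ (b p₁) * φ q₃ (b p₃))) :=
        fun q₁ q₂ q₃ q₄ => sum3' (C q₁ q₂ q₃ q₄) (φ q₁) (φ q₂) (φ q₃) (φ q₄) (b p₁) (b p₂) (b p₃) (b p₄)
      simp only [step3]
      simp only [hφeval]
      simp only [mul_add, add_mul, mul_sub, sub_mul, mul_ite, ite_mul, mul_zero, zero_mul,
        mul_one, one_mul, Finset.sum_add_distrib, Finset.sum_sub_distrib, sum_ite_push,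
        Finset.sum_ite_eq, Finset.sum_ite_eq', Finset.mem_univ, if_true,
        Finset.mul_sum, Finset.sum_mul]
      have hCval : ∀ q₁ q₂ q₃ q₄ : Fin n, C q₁ q₂ q₃ q₄ =
          (1/24) * (R (b q₁) (b q₃) (b q₂) (b q₄) + R (b q₁) (b q₄) (b q₂) (b q₃)) :=
        fun _ _ _ _ => rfl
      have hpair := pair_symm h1 h2 hB
      linarith [hCval p₁ p₃ p₂ p₄,
        hCval p₃ p₁ p₂ p₄,
        hCval p₁ p₃ p₄ p₂,
        hCval p₃ p₁ p₄ p₂,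
        hCval p₁ p₄ p₂ p₃,
        hCval p₄ p₁ p₂ p₃,
        hCval p₁ p₄ p₃ p₂,
        hCval p₄ p₁ p₃ p₂,
        hCval p₂ p₃ p₁ p₄,
        hCval p₃ p₂ p₁ p₄,
        hCval p₂ p₃ p₄ p₁,
        hCval p₃ p₂ p₄ p₁,
        hCval p₂ p₄ p₁ p₃,
        hCval p₄ p₂ p₁ p₃,
        hCval p₂ p₄ p₃ p₁,
        hCval p₄ p₂ p₃ p₁,
        h1 (b p₁) (b p₂) (b p₃) (b p₄),
        h1 (b p₁) (b p₂) (b p₄) (b p₃),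
        h1 (b p₁) (b p₃) (b p₂) (b p₄),
        h1 (b p₁) (b p₃) (b p₄) (b p₂),
        h1 (b p₁) (b p₄) (b p₂) (b p₃),
        h1 (b p₁) (b p₄) (b p₃) (b p₂),
        h1 (b p₂) (b p₁) (b p₃) (b p₄),
        h1 (b p₂) (b p₁) (b p₄) (b p₃),
        h1 (b p₂) (b p₃) (b p₁) (b p₄),
        h1 (b p₂) (b p₃) (b p₄) (b p₁),
        h1 (b p₂) (b p₄) (b p₁) (b p₃),
        h1 (b p₂) (b p₄) (b p₃) (b p₁),
        h1 (b p₃) (b p₁) (b p₂) (b p₄),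
        h1 (b p₃) (b p₁) (b p₄) (b p₂),
        h1 (b p₃) (b p₂) (b p₁) (b p₄),
        h1 (b p₃) (b p₂) (b p₄) (b p₁),
        h1 (b p₃) (b p₄) (b p₁) (b p₂),
        h1 (b p₃) (b p₄) (b p₂) (b p₁),
        h1 (b p₄) (b p₁) (b p₂) (b p₃),
        h1 (b p₄) (b p₁) (b p₃) (b p₂),
        h1 (b p₄) (b p₂) (b p₁) (b p₃),
        h1 (b p₄) (b p₂) (b p₃) (b p₁),
        h1 (b p₄) (b p₃) (b p₁) (b p₂),
        h1 (b p₄) (b p₃) (b p₂) (b p₁),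
        h2 (b p₁) (b p₂) (b p₃) (b p₄),
        h2 (b p₁) (b p₂) (b p₄) (b p₃),
        h2 (b p₁) (b p₃) (b p₂) (b p₄),
        h2 (b p₁) (b p₃) (b p₄) (b p₂),
        h2 (b p₁) (b p₄) (b p₂) (b p₃),
        h2 (b p₁) (b p₄) (b p₃) (b p₂),
        h2 (b p₂) (b p₁) (b p₃) (b p₄),
        h2 (b p₂) (b p₁) (b p₄) (b p₃),
        h2 (b p₂) (b p₃) (b p₁) (b p₄),
        h2 (b p₂) (b p₃) (b p₄) (b p₁),
        h2 (b p₂) (b p₄) (b p₁) (b p₃),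
        h2 (b p₂) (b p₄) (b p₃) (b p₁),
        h2 (b p₃) (b p₁) (b p₂) (b p₄),
        h2 (b p₃) (b p₁) (b p₄) (b p₂),
        h2 (b p₃) (b p₂) (b p₁) (b p₄),
        h2 (b p₃) (b p₂) (b p₄) (b p₁),
        h2 (b p₃) (b p₄) (b p₁) (b p₂),
        h2 (b p₃) (b p₄) (b p₂) (b p₁),
        h2 (b p₄) (b p₁) (b p₂) (b p₃),
        h2 (b p₄) (b p₁) (b p₃) (b p₂),
        h2 (b p₄) (b p₂) (b p₁) (b p₃),
        h2 (b p₄) (b p₂) (b p₃) (b p₁),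
        h2 (b p₄) (b p₃) (b p₁) (b p₂),
        h2 (b p₄) (b p₃) (b p₂) (b p₁),
        hB (b p₁) (b p₂) (b p₃) (b p₄),
        hB (b p₁) (b p₂) (b p₄) (b p₃),
        hB (b p₁) (b p₃) (b p₂) (b p₄),
        hB (b p₁) (b p₃) (b p₄) (b p₂),
        hB (b p₁) (b p₄) (b p₂) (b p₃),
        hB (b p₁) (b p₄) (b p₃) (b p₂),
        hB (b p₂) (b p₁) (b p₃) (b p₄),
        hB (b p₂) (b p₁) (b p₄) (b p₃),
        hB (b p₂) (b p₃) (b p₁) (b p₄),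
        hB (b p₂) (b p₃) (b p₄) (b p₁),
        hB (b p₂) (b p₄) (b p₁) (b p₃),
        hB (b p₂) (b p₄) (b p₃) (b p₁),
        hB (b p₃) (b p₁) (b p₂) (b p₄),
        hB (b p₃) (b p₁) (b p₄) (b p₂),
        hB (b p₃) (b p₂) (b p₁) (b p₄),
        hB (b p₃) (b p₂) (b p₄) (b p₁),
        hB (b p₃) (b p₄) (b p₁) (b p₂),
        hB (b p₃) (b p₄) (b p₂) (b p₁),
        hB (b p₄) (b p₁) (b p₂) (b p₃),
        hB (b p₄) (b p₁) (b p₃) (b p₂),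
        hB (b p₄) (b p₂) (b p₁) (b p₃),
        hB (b p₄) (b p₂) (b p₃) (b p₁),
        hB (b p₄) (b p₃) (b p₁) (b p₂),
        hB (b p₄) (b p₃) (b p₂) (b p₁),
        hpair (b p₁) (b p₂) (b p₃) (b p₄),
        hpair (b p₁) (b p₂) (b p₄) (b p₃),
        hpair (b p₁) (b p₃) (b p₂) (b p₄),
        hpair (b p₁) (b p₃) (b p₄) (b p₂),
        hpair (b p₁) (b p₄) (b p₂) (b p₃),
        hpair (b p₁) (b p₄) (b p₃) (b p₂),
        hpair (b p₂) (b p₁) (b p₃) (b p₄),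
        hpair (b p₂) (b p₁) (b p₄) (b p₃),
        hpair (b p₂) (b p₃) (b p₁) (b p₄),
        hpair (b p₂) (b p₃) (b p₄) (b p₁),
        hpair (b p₂) (b p₄) (b p₁) (b p₃),
        hpair (b p₂) (b p₄) (b p₃) (b p₁),
        hpair (b p₃) (b p₁) (b p₂) (b p₄),
        hpair (b p₃) (b p₁) (b p₄) (b p₂),
        hpair (b p₃) (b p₂) (b p₁) (b p₄),
        hpair (b p₃) (b p₂) (b p₄) (b p₁),
        hpair (b p₃) (b p₄) (b p₁) (b p₂),
        hpair (b p₃) (b p₄) (b p₂) (b p₁),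
        hpair (b p₄) (b p₁) (b p₂) (b p₃),
        hpair (b p₄) (b p₁) (b p₃) (b p₂),
        hpair (b p₄) (b p₂) (b p₁) (b p₃),
        hpair (b p₄) (b p₂) (b p₃) (b p₁),
        hpair (b p₄) (b p₃) (b p₁) (b p₂),
        hpair (b p₄) (b p₃) (b p₂) (b p₁)]
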